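/- arXiv:1507.01418 — 2 statements merged into one kernel-verified Lean document; each statement's English description precedes it below -/
import Mathlib

section
/- Let X be a complex Banach space and A a bounded linear operator on X. Then σ_n(A) = closure(convexHull({j(Ax) : x ∈ X, ‖x‖ = 1, j ∈ J(x)})). -/
open Complex

variable {X : Type*} [NormedAddCommGroup X] [NormedSpace ℂ X] [CompleteSpace X]

/-- The open half plane `H_{θ,ω}`, the rotation by the angle `θ` of `{z | Re z > ω}`. -/
def halfPlane (θ ω : ℝ) : Set ℂ :=
  {z : ℂ | ω < (Complex.exp (-(θ : ℂ) * Complex.I) * z).re}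

/-- The numerical resolvent set of a bounded operator `A` : the union of all open half
planes `H_{θ,ω}` contained in the resolvent set of `A` on which
`‖R(z, A)‖ ≤ 1 / dist(z, ∂H_{θ,ω}) = 1 / (Re (e^{-iθ} z) - ω)`. -/
noncomputable def numResolventSet (A : X →L[ℂ] X) : Set ℂ :=
  {z : ℂ | ∃ θ ω : ℝ, z ∈ halfPlane θ ω ∧ halfPlane θ ω ⊆ resolventSet ℂ A ∧
    ∀ w ∈ halfPlane θ ω,
      ‖resolvent A w‖ ≤ 1 / ((Complex.exp (-(θ : ℂ) * Complex.I) * w).re - ω)}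

/-- The numerical spectrum of a bounded operator `A`. -/
noncomputable def numSpectrum (A : X →L[ℂ] X) : Set ℂ := (numResolventSet A)ᶜ

/-- The duality set `J(x)` of a vector `x`. -/
noncomputable def dualitySet (x : X) : Set (X →L[ℂ] ℂ) :=
  {j | j x = (‖x‖ ^ 2 : ℝ) ∧ ‖j‖ = ‖x‖}

/-!
A closed half plane `{Re (u w) ≤ ω}` (`‖u‖ = 1`) contains the numerical range `W(A)` exactly when
the open half plane `H = {Re (u z) > ω}` lies in `ρ(A)` with `‖R(z, A)‖ ≤ 1 / (Re (u z) - ω)` on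
`H`. Since, by Hahn–Banach in `ℂ`, the closed convex hull of `W(A)` is the intersection of the
closed half planes containing `W(A)`, the theorem follows.

If `Re (u w) ≤ ω` on `W(A)`, pairing `(z - A) x` with a duality functional of `x` gives
`‖(z - A) x‖ ≥ (Re (u z) - ω) ‖x‖`, hence the resolvent estimate on `H ∩ ρ(A)`. That estimate
makes `ρ(A)` relatively closed in the connected set `H`, which meets `ρ(A)` far away, so `H ⊆ ρ(A)`.
Conversely, for `‖x‖ = 1`, `j ∈ J(x)` and `z = t / u`, apply `R(z, A)` to
`(z - A)(t x + u A x) = t z x - u A² x` and pair `t x + u A x` with `j`: this gives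
`(t + Re (u j (A x))) (t - ω) ≤ t² + ‖A‖²`, and letting `t → ∞` yields `Re (u j (A x)) ≤ ω`.
-/

namespace ContinuousLinearMap

variable {𝕜 E F : Type*} [RCLike 𝕜] [NormedAddCommGroup E] [NormedSpace 𝕜 E]
  [NormedAddCommGroup F] [NormedSpace 𝕜 F]

theorem mul_norm_le_norm_apply_of_norm_eq_one (T : E →L[𝕜] F) {d : ℝ}
    (h : ∀ x, ‖x‖ = 1 → d ≤ ‖T x‖) (x : E) : d * ‖x‖ ≤ ‖T x‖ := by
  rcases eq_or_ne x 0 with rfl | hx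
  · simp
  have hx' : 0 < ‖x‖ := norm_pos_iff.mpr hx
  have hunit := h ((‖x‖⁻¹ : 𝕜) • x) (by simp [norm_smul, hx'.ne'])
  rw [map_smul, norm_smul, norm_inv, RCLike.norm_ofReal, abs_norm] at hunit
  rwa [le_inv_mul_iff₀ hx', mul_comm] at hunit

theorem apply_ringInverse_apply {T : E →L[𝕜] E} (hT : IsUnit T) (y : E) :
    T (Ring.inverse T y) = y := by
  simpa using congr($(Ring.mul_inverse_cancel T hT) y)

theorem ringInverse_apply_apply {T : E →L[𝕜] E} (hT : IsUnit T) (y : E) :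
    Ring.inverse T (T y) = y := by
  simpa using congr($(Ring.inverse_mul_cancel T hT) y)

theorem norm_ringInverse_le_of_mul_norm_le {T : E →L[𝕜] E} (hT : IsUnit T) {d : ℝ} (hd : 0 < d)
    (h : ∀ x, d * ‖x‖ ≤ ‖T x‖) : ‖Ring.inverse T‖ ≤ d⁻¹ := by
  refine opNorm_le_bound _ (by positivity) fun y => ?_
  have := h (Ring.inverse T y)
  rw [apply_ringInverse_apply hT] at this
  rw [inv_mul_eq_div, le_div_iff₀' hd]
  exact this

end ContinuousLinearMap

theorem mem_resolventSet_of_norm_resolvent_mul_lt {𝕜 𝒜 : Type*} [NormedField 𝕜] [NormedRing 𝒜]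
    [NormedAlgebra 𝕜 𝒜] [HasSummableGeomSeries 𝒜] {a : 𝒜} {w z : 𝕜}
    (hw : w ∈ resolventSet 𝕜 a) (h : ‖resolvent a w‖ * (‖w - z‖ * ‖(1 : 𝒜)‖) < 1) :
    z ∈ resolventSet 𝕜 a := by
  have hsmall : ‖resolvent a w * algebraMap 𝕜 𝒜 (w - z)‖ < 1 :=
    (norm_mul_le _ _).trans_lt (by rwa [norm_algebraMap])
  have hfactor : algebraMap 𝕜 𝒜 z - a =
      (algebraMap 𝕜 𝒜 w - a) * (1 - resolvent a w * algebraMap 𝕜 𝒜 (w - z)) := by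
    rw [mul_sub, mul_one, ← mul_assoc, resolvent, Ring.mul_inverse_cancel _ hw, one_mul, map_sub]
    abel
  rw [spectrum.mem_resolventSet_iff, hfactor]
  exact hw.mul (isUnit_one_sub_of_norm_lt_one hsmall)

theorem nonpos_of_eventually_mul_le {a b : ℝ} (h : ∀ᶠ t in Filter.atTop, t * a ≤ b) : a ≤ 0 := by
  by_contra! ha
  obtain ⟨t, hle, hlt⟩ :=
    (h.and ((Filter.tendsto_id.atTop_mul_const ha).eventually_gt_atTop b)).exists
  exact hle.not_gt hlt

theorem mem_halfPlane {θ ω : ℝ} {z : ℂ} :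
    z ∈ halfPlane θ ω ↔ ω < (exp (-(θ : ℂ) * I) * z).re :=
  Iff.rfl

theorem isLinearMap_re_mul (c : ℂ) : IsLinearMap ℝ fun w : ℂ => (c * w).re :=
  ⟨fun v w => by rw [mul_add, add_re], fun r w => by rw [mul_smul_comm, smul_re]⟩

theorem convex_halfPlane (θ ω : ℝ) : Convex ℝ (halfPlane θ ω) :=
  convex_halfSpace_gt (isLinearMap_re_mul _) ω

theorem exp_neg_mul_I_mul_exp_mul_I (θ : ℝ) :
    exp (-(θ : ℂ) * I) * exp (θ * I) = 1 := by
  rw [← exp_add, neg_mul, neg_add_cancel, exp_zero]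

theorem norm_exp_neg_ofReal_mul_I (θ : ℝ) : ‖exp (-(θ : ℂ) * I)‖ = 1 := by
  simpa using norm_exp_ofReal_mul_I (-θ)

theorem notMem_closure_convexHull_iff_exists_halfPlane {S : Set ℂ} {z : ℂ} :
    z ∉ closure (convexHull ℝ S) ↔
      ∃ θ ω : ℝ, z ∈ halfPlane θ ω ∧ ∀ w ∈ S, (exp (-(θ : ℂ) * I) * w).re ≤ ω := by
  constructor
  · intro hnot
    -- for empty `S` the separating functional may vanish, so that case is done by hand
    rcases S.eq_empty_or_nonempty with rfl | ⟨w₀, hw₀⟩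
    · exact ⟨0, _, sub_one_lt (exp (-((0 : ℝ) : ℂ) * I) * z).re, by simp⟩
    obtain ⟨f, u, hS, hz⟩ := RCLike.geometric_hahn_banach_closed_point (𝕜 := ℂ)
      (convex_convexHull ℝ S).closure isClosed_closure hnot
    set c := f 1 with hc_def
    have hf : ∀ w, RCLike.re (f w) = (c * w).re := fun w => by
      rw [hc_def, mul_comm, ← smul_eq_mul, ← f.map_smul, smul_eq_mul, mul_one, RCLike.re_to_complex]
    replace hS : ∀ w ∈ S, (c * w).re < u := fun w hw => by
      simpa only [hf] using hS w (subset_closure (subset_convexHull ℝ S hw))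
    rw [hf] at hz
    have hc : c ≠ 0 := by
      intro hc0
      simp only [hc0, zero_mul, zero_re] at hS hz
      linarith [hS w₀ hw₀]
    have hnorm : 0 < ‖c‖ := norm_pos_iff.mpr hc
    have hre : ∀ w, (exp (-((-arg c : ℝ) : ℂ) * I) * w).re = (c * w).re / ‖c‖ := fun w => by
      rw [eq_div_iff hnorm.ne']
      conv_rhs => rw [← norm_mul_exp_arg_mul_I c, mul_assoc, re_ofReal_mul]
      push_cast
      ring_nf
    refine ⟨-arg c, u / ‖c‖, ?_, fun w hw => ?_⟩
    · rw [mem_halfPlane, hre]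
      exact div_lt_div_of_pos_right hz hnorm
    · rw [hre]
      exact div_le_div_of_nonneg_right (hS w hw).le hnorm.le
  · rintro ⟨θ, ω, hz, hS⟩ hmem
    have hclosed : closure (convexHull ℝ S) ⊆ {w | (exp (-(θ : ℂ) * I) * w).re ≤ ω} :=
      closure_minimal (convexHull_min hS (convex_halfSpace_le (isLinearMap_re_mul _) ω))
        (isClosed_le (by fun_prop) continuous_const)
    exact (hclosed hmem).not_gt (mem_halfPlane.mp hz)

section NumericalRange

variable {E : Type*} [NormedAddCommGroup E] [NormedSpace ℂ E]

def numRange (A : E →L[ℂ] E) : Set ℂ :=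
  {z | ∃ x : E, ∃ j ∈ dualitySet x, ‖x‖ = 1 ∧ z = j (A x)}

def IsNumResolventHalfPlane (A : E →L[ℂ] E) (θ ω : ℝ) : Prop :=
  halfPlane θ ω ⊆ resolventSet ℂ A ∧
    ∀ w ∈ halfPlane θ ω, ‖resolvent A w‖ ≤ 1 / ((exp (-(θ : ℂ) * I) * w).re - ω)

theorem dualitySet_nonempty (x : E) : (dualitySet x).Nonempty := by
  rcases eq_or_ne x 0 with rfl | hx
  · exact ⟨0, by simp [dualitySet]⟩
  obtain ⟨g, hg, hgx⟩ := exists_dual_vector ℂ x (norm_ne_zero_iff.mpr hx)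
  refine ⟨(‖x‖ : ℂ) • g, ?_, ?_⟩
  · simp [hgx, sq]
  · rw [norm_smul, hg, mul_one, norm_real, norm_norm]

theorem re_mul_le_norm {u : ℂ} (hu : ‖u‖ ≤ 1) (v : ℂ) : (u * v).re ≤ ‖v‖ :=
  (re_le_norm _).trans (by rw [norm_mul]; exact mul_le_of_le_one_left (norm_nonneg _) hu)

theorem sub_mul_norm_le_of_re_mul_numRange_le {A : E →L[ℂ] E} {u : ℂ} {ω : ℝ} (hu : ‖u‖ ≤ 1)
    (hW : ∀ w ∈ numRange A, (u * w).re ≤ ω) (z : ℂ) (x : E) :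
    ((u * z).re - ω) * ‖x‖ ≤ ‖(algebraMap ℂ (E →L[ℂ] E) z - A) x‖ := by
  refine ContinuousLinearMap.mul_norm_le_norm_apply_of_norm_eq_one _ (fun x hx => ?_) x
  obtain ⟨j, hj⟩ := dualitySet_nonempty x
  have hjx : j x = 1 := by rw [hj.1, hx]; simp
  have hj1 : ‖j‖ = 1 := hj.2.trans hx
  set y := (algebraMap ℂ (E →L[ℂ] E) z - A) x
  have hjy : j y = z - j (A x) := by simp [y, hjx]
  calc (u * z).re - ω ≤ (u * z).re - (u * j (A x)).re := by linarith [hW _ ⟨x, j, hj, hx, rfl⟩]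
    _ = (u * j y).re := by rw [hjy, mul_sub, sub_re]
    _ ≤ ‖j y‖ := re_mul_le_norm hu _
    _ ≤ ‖y‖ := (j.le_opNorm y).trans_eq (by rw [hj1, one_mul])

theorem norm_resolvent_le_of_re_mul_numRange_le {A : E →L[ℂ] E} {u z : ℂ} {ω : ℝ} (hu : ‖u‖ ≤ 1)
    (hW : ∀ w ∈ numRange A, (u * w).re ≤ ω) (hz : ω < (u * z).re)
    (hρ : z ∈ resolventSet ℂ A) : ‖resolvent A z‖ ≤ ((u * z).re - ω)⁻¹ :=
  ContinuousLinearMap.norm_ringInverse_le_of_mul_norm_le (spectrum.mem_resolventSet_iff.mp hρ)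
    (sub_pos.mpr hz) (sub_mul_norm_le_of_re_mul_numRange_le hu hW z)

theorem halfPlane_subset_resolventSet [CompleteSpace E] {A : E →L[ℂ] E} {θ ω : ℝ}
    (hbound : ∀ w ∈ halfPlane θ ω, w ∈ resolventSet ℂ A →
      ‖resolvent A w‖ ≤ ((exp (-(θ : ℂ) * I) * w).re - ω)⁻¹) :
    halfPlane θ ω ⊆ resolventSet ℂ A := by
  have hone : ‖(1 : E →L[ℂ] E)‖ ≤ 1 := ContinuousLinearMap.norm_id_le
  refine (convex_halfPlane θ ω).isPreconnected.subset_of_closure_inter_subset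
    (spectrum.isOpen_resolventSet A) ?_ ?_
  · set s := max ω 0 + ‖A‖ + 1
    refine ⟨exp (θ * I) * s, ?_, spectrum.mem_resolventSet_of_norm_lt_mul ?_⟩
    · rw [mem_halfPlane, ← mul_assoc, exp_neg_mul_I_mul_exp_mul_I, one_mul, ofReal_re]
      linarith [le_max_left ω 0, norm_nonneg A]
    · rw [norm_mul, norm_exp_ofReal_mul_I, one_mul, norm_real, Real.norm_of_nonneg (by positivity)]
      linarith [mul_le_of_le_one_right (norm_nonneg A) hone, le_max_right ω 0]
  · rintro z ⟨hzcl, hz⟩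
    rw [mem_halfPlane] at hz
    set u := exp (-(θ : ℂ) * I)
    obtain ⟨w, hw, hzw⟩ :=
      Metric.mem_closure_iff.mp hzcl (((u * z).re - ω) / 2) (by linarith)
    rw [dist_eq_norm'] at hzw
    have hshift : (u * z).re - (u * w).re ≤ ‖w - z‖ := by
      rw [← sub_re, ← mul_sub, ← norm_neg, neg_sub]
      exact re_mul_le_norm (norm_exp_neg_ofReal_mul_I θ).le _
    have hwH : ω < (u * w).re := by linarith
    refine mem_resolventSet_of_norm_resolvent_mul_lt hw ?_
    calc ‖resolvent A w‖ * (‖w - z‖ * ‖(1 : E →L[ℂ] E)‖)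
        ≤ ((u * w).re - ω)⁻¹ * ‖w - z‖ :=
          mul_le_mul (hbound w hwH hw) (mul_le_of_le_one_right (norm_nonneg _) hone)
            (by positivity) (inv_nonneg.mpr (sub_pos.mpr hwH).le)
      _ < 1 := by
          rw [inv_mul_lt_one₀ (sub_pos.mpr hwH)]
          linarith

theorem add_mul_sub_le_of_norm_resolvent_le {A : E →L[ℂ] E} {u z : ℂ} {ω t : ℝ} (hu : ‖u‖ = 1)
    (hzt : u * z = t) (ht : ω < t) (hz : z ∈ resolventSet ℂ A)
    (hR : ‖resolvent A z‖ ≤ (t - ω)⁻¹) {x : E} {j : E →L[ℂ] ℂ} (hj : j ∈ dualitySet x)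
    (hx : ‖x‖ = 1) : (t + (u * j (A x)).re) * (t - ω) ≤ t ^ 2 + ‖A‖ ^ 2 := by
  set T := algebraMap ℂ (E →L[ℂ] E) z - A
  set y := (t : ℂ) • x + u • A x
  have hzn : ‖z‖ = |t| := by rw [← Real.norm_eq_abs, ← norm_real, ← hzt, norm_mul, hu, one_mul]
  have hTy : T y = ((t : ℂ) * z) • x - u • A (A x) := by
    simp only [T, y, sub_apply, map_add, map_smul, Algebra.algebraMap_eq_smul_one, smul_apply,
      one_apply_eq_self]
    linear_combination (norm := module) hzt • A x
  have hTy_norm : ‖T y‖ ≤ t ^ 2 + ‖A‖ ^ 2 := by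
    rw [hTy]
    refine (norm_sub_le _ _).trans (add_le_add (le_of_eq ?_) ?_)
    · rw [norm_smul, norm_mul, norm_real, hzn, hx, Real.norm_eq_abs, mul_one, abs_mul_abs_self,
        sq]
    · rw [norm_smul, hu, one_mul, sq]
      simpa using A.le_opNorm_of_le (A.le_opNorm_of_le hx.le)
  have hy_norm : ‖y‖ ≤ (t - ω)⁻¹ * (t ^ 2 + ‖A‖ ^ 2) :=
    calc ‖y‖ = ‖resolvent A z (T y)‖ :=
          by rw [resolvent, ContinuousLinearMap.ringInverse_apply_apply hz]
      _ ≤ ‖resolvent A z‖ * ‖T y‖ := (resolvent A z).le_opNorm _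
      _ ≤ (t - ω)⁻¹ * (t ^ 2 + ‖A‖ ^ 2) := by gcongr
  have hjx : j x = 1 := by rw [hj.1, hx]; simp
  have hjy : t + (u * j (A x)).re ≤ ‖y‖ :=
    calc t + (u * j (A x)).re = (j y).re := by simp [y, hjx]
      _ ≤ ‖j y‖ := re_le_norm _
      _ ≤ ‖y‖ := (j.le_opNorm y).trans_eq (by rw [hj.2, hx, one_mul])
  rw [mul_comm, ← le_inv_mul_iff₀ (sub_pos.mpr ht)]
  exact hjy.trans hy_norm

theorem re_mul_numRange_le_of_isNumResolventHalfPlane {A : E →L[ℂ] E} {θ ω : ℝ}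
    (hA : IsNumResolventHalfPlane A θ ω) :
    ∀ w ∈ numRange A, (exp (-(θ : ℂ) * I) * w).re ≤ ω := by
  rintro _ ⟨x, j, hj, hx, rfl⟩
  set r := (exp (-(θ : ℂ) * I) * j (A x)).re
  suffices r - ω ≤ 0 by linarith
  refine nonpos_of_eventually_mul_le (b := ‖A‖ ^ 2 + r * ω)
    ((Filter.eventually_gt_atTop ω).mono fun t ht => ?_)
  have hzt : exp (-(θ : ℂ) * I) * (exp (θ * I) * t) = t := by
    rw [← mul_assoc, exp_neg_mul_I_mul_exp_mul_I, one_mul]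
  have hzH : exp (θ * I) * t ∈ halfPlane θ ω := by rw [mem_halfPlane, hzt, ofReal_re]; exact ht
  have hR := hA.2 _ hzH
  rw [hzt, ofReal_re, one_div] at hR
  have := add_mul_sub_le_of_norm_resolvent_le (norm_exp_neg_ofReal_mul_I θ) hzt ht (hA.1 hzH) hR
    hj hx
  linear_combination this

theorem isNumResolventHalfPlane_iff [CompleteSpace E] {A : E →L[ℂ] E} {θ ω : ℝ} :
    IsNumResolventHalfPlane A θ ω ↔ ∀ w ∈ numRange A, (exp (-(θ : ℂ) * I) * w).re ≤ ω := by
  refine ⟨re_mul_numRange_le_of_isNumResolventHalfPlane, fun hW => ?_⟩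
  have hbound : ∀ w ∈ halfPlane θ ω, w ∈ resolventSet ℂ A →
      ‖resolvent A w‖ ≤ ((exp (-(θ : ℂ) * I) * w).re - ω)⁻¹ := fun w hw hρ =>
    norm_resolvent_le_of_re_mul_numRange_le (norm_exp_neg_ofReal_mul_I θ).le hW hw hρ
  refine ⟨halfPlane_subset_resolventSet hbound, fun w hw => ?_⟩
  rw [one_div]
  exact hbound w hw (halfPlane_subset_resolventSet hbound hw)

end NumericalRange

/-- For a bounded operator, `σ_n(A)` equals the closed convex hull of the numerical range. -/
theorem numSpectrum_eq_closure_convexHull (A : X →L[ℂ] X) :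
    numSpectrum A =
      closure (convexHull ℝ
        {z : ℂ | ∃ x : X, ∃ j ∈ dualitySet x, ‖x‖ = 1 ∧ z = j (A x)}) := by
  ext z
  rw [numSpectrum, Set.mem_compl_iff, ← not_iff_not, not_not,
    notMem_closure_convexHull_iff_exists_halfPlane]
  exact exists₂_congr fun θ ω => and_congr_right fun _ => isNumResolventHalfPlane_iff
end

section
/- Let H be a complex Hilbert space and A a bounded linear operator on H. Then σ_n(A) = closure({⟨Ax, x⟩ : x ∈ H, ‖x‖ = 1}), the closure of the numerical range W(A) of A, where ⟨Ax, x⟩ denotes the inner product of Ax with x (linear in the first entry). -/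
/-!
A half plane `H` is admissible for `A` (it lies in the resolvent set and
`‖R(z, A)‖ ≤ 1 / dist(z, ∂H)` on `H`) exactly when it misses the numerical range `W(A)`.
If it does, then for `z ∈ H` the operator `z - A` is coercive,
`|⟪x, (z - A) x⟫| ≥ dist(z, ∂H) ‖x‖²`, hence invertible with the required bound.
Conversely, if `w = ⟪x, A x⟫ ∈ H` for a unit vector `x`, move from `w` a distance `t` along the
inner normal of `H` to a point `z`: by Pythagoras `‖(z - A) x‖² = t² + ‖w x - A x‖²`, which for
large `t` is smaller than `dist(z, ∂H)² = (dist(w, ∂H) + t)²`.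

So `ρ_n(A)` is the union of the open half planes disjoint from `W(A)`, and by Hahn–Banach this is
the complement of the closure of `W(A)`, because `W(A)` is convex (Toeplitz–Hausdorff). For
convexity one normalises to `⟪x, B x⟫ = 1`, `⟪y, B y⟫ = 0`, rotates `y` by a phase so that the
cross term `⟪x, B y⟫ + ⟪y, B x⟫` is real, and applies the intermediate value theorem to the
(now real) Rayleigh quotient along the segment from `y` to `x`.
-/

open Complex

variable {X : Type*} [NormedAddCommGroup X] [NormedSpace ℂ X] [CompleteSpace X]

open scoped InnerProductSpace

section NormedSpace

variable {𝕜 E : Type*} [NontriviallyNormedField 𝕜] [NormedAddCommGroup E] [NormedSpace 𝕜 E]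

theorem ContinuousLinearMap.norm_ringInverse_le_inv_iff {T : E →L[𝕜] E} (hT : IsUnit T)
    {d : ℝ} (hd : 0 < d) : ‖Ring.inverse T‖ ≤ d⁻¹ ↔ ∀ x, d * ‖x‖ ≤ ‖T x‖ := by
  obtain ⟨U, rfl⟩ := hT
  rw [Ring.inverse_unit]
  constructor
  · intro h x
    calc d * ‖x‖ = d * ‖(↑U⁻¹ : E →L[𝕜] E) ((U : E →L[𝕜] E) x)‖ := by
          rw [← mul_apply_eq_comp, Units.inv_mul, one_apply_eq_self]
      _ ≤ d * (‖(↑U⁻¹ : E →L[𝕜] E)‖ * ‖(U : E →L[𝕜] E) x‖) := by gcongr; exact le_opNorm _ _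
      _ ≤ d * (d⁻¹ * ‖(U : E →L[𝕜] E) x‖) := by gcongr
      _ = ‖(U : E →L[𝕜] E) x‖ := by field_simp
  · intro h
    refine opNorm_le_bound _ (inv_nonneg.2 hd.le) fun y => ?_
    rw [inv_mul_eq_div, le_div_iff₀ hd, mul_comm]
    simpa [← mul_apply_eq_comp] using h ((↑U⁻¹ : E →L[𝕜] E) y)

end NormedSpace

section InnerProductSpace

variable {𝕜 E : Type*} [RCLike 𝕜] [NormedAddCommGroup E] [InnerProductSpace 𝕜 E]

theorem norm_smul_sub_sq_of_norm_eq_one {x : E} (hx : ‖x‖ = 1) (c : 𝕜) (y : E) :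
    ‖c • x - y‖ ^ 2 = ‖c - ⟪x, y⟫_𝕜‖ ^ 2 + ‖⟪x, y⟫_𝕜 • x - y‖ ^ 2 := by
  have horth : ⟪(c - ⟪x, y⟫_𝕜) • x, ⟪x, y⟫_𝕜 • x - y⟫_𝕜 = 0 := by
    simp only [inner_sub_right, inner_smul_right, inner_smul_left, map_sub, inner_conj_symm,
      inner_self_eq_norm_sq_to_K, hx, map_one, one_pow, mul_one]
    ring
  have h := norm_add_sq_eq_norm_sq_add_norm_sq_of_inner_eq_zero _ _ horth
  rw [norm_smul, hx, mul_one] at h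
  rw [show c • x - y = (c - ⟪x, y⟫_𝕜) • x + (⟪x, y⟫_𝕜 • x - y) by module, sq, sq, sq, h]

theorem ContinuousLinearMap.norm_ringInverse_le_of_forall_le_norm_inner_map [CompleteSpace E]
    (T : E →L[𝕜] E) {d : ℝ} (hd : 0 < d) (h : ∀ x, ‖x‖ ^ 2 * d ≤ ‖⟪T x, x⟫_𝕜‖) :
    ‖Ring.inverse T‖ ≤ d⁻¹ := by
  lift d to NNReal using hd.le
  refine (T.norm_ringInverse_le_inv_iff (isUnit_of_forall_le_norm_inner_map T hd h) hd).2
    fun x => ?_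
  have := T.bound_of_antilipschitz (antilipschitz_of_forall_le_inner_map T hd h) x
  rw [NNReal.coe_inv, inv_mul_eq_div, le_div_iff₀ hd] at this
  linarith

end InnerProductSpace

section NumericalRange

variable {H : Type*} [NormedAddCommGroup H] [InnerProductSpace ℂ H]

def numericalRange (A : H →L[ℂ] H) : Set ℂ :=
  {z | ∃ x : H, ‖x‖ = 1 ∧ z = ⟪x, A x⟫_ℂ}

theorem inner_map_self_div_norm_sq_mem_numericalRange (A : H →L[ℂ] H) {x : H} (hx : x ≠ 0) :
    ⟪x, A x⟫_ℂ / (‖x‖ : ℂ) ^ 2 ∈ numericalRange A := by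
  refine ⟨(‖x‖⁻¹ : ℂ) • x, norm_smul_inv_norm hx, ?_⟩
  simp only [map_smul, inner_smul_left, inner_smul_right, map_inv₀, Complex.conj_ofReal]
  ring

theorem re_mul_inner_map_self_le {A : H →L[ℂ] H} {ε : ℂ} {ω : ℝ}
    (h : ∀ w ∈ numericalRange A, (ε * w).re ≤ ω) (x : H) :
    (ε * ⟪x, A x⟫_ℂ).re ≤ ω * ‖x‖ ^ 2 := by
  rcases eq_or_ne x 0 with rfl | hx
  · simp
  have hpos : 0 < ‖x‖ ^ 2 := by positivity
  have := h _ (inner_map_self_div_norm_sq_mem_numericalRange A hx)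
  rwa [← mul_div_assoc, ← Complex.ofReal_pow, Complex.div_ofReal_re, div_le_iff₀ hpos] at this

theorem exists_norm_eq_one_im_inner_add_inner_eq_zero (B : H →L[ℂ] H) (x y : H) :
    ∃ μ : ℂ, ‖μ‖ = 1 ∧ (⟪x, B (μ • y)⟫_ℂ + ⟪μ • y, B x⟫_ℂ).im = 0 := by
  set s := ⟪x, B y⟫_ℂ - (starRingEnd ℂ) ⟪y, B x⟫_ℂ
  obtain ⟨μ, hμ, hs⟩ : ∃ μ : ℂ, ‖μ‖ = 1 ∧ μ * s = ‖s‖ := by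
    refine ⟨Complex.exp (-(s.arg : ℂ) * Complex.I), by simp [Complex.norm_exp], ?_⟩
    conv_lhs => rw [← Complex.norm_mul_exp_arg_mul_I s]
    rw [mul_left_comm, ← Complex.exp_add]
    simp
  refine ⟨μ, hμ, ?_⟩
  have hsplit : ⟪x, B (μ • y)⟫_ℂ + ⟪μ • y, B x⟫_ℂ = μ * s + (μ * (starRingEnd ℂ) ⟪y, B x⟫_ℂ
      + (starRingEnd ℂ) (μ * (starRingEnd ℂ) ⟪y, B x⟫_ℂ)) := by
    simp only [s, map_smul, inner_smul_right, inner_smul_left, map_mul, Complex.conj_conj]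
    ring
  rw [hsplit, Complex.add_im, hs, Complex.add_im, Complex.conj_im]
  simp

theorem smul_add_one_sub_smul_ne_zero (B : H →L[ℂ] H) {x y : H} (hx : ⟪x, B x⟫_ℂ ≠ 0)
    (hy : y ≠ 0) (hy0 : ⟪y, B y⟫_ℂ = 0) (t : ℝ) : (t : ℂ) • x + (1 - (t : ℂ)) • y ≠ 0 := by
  intro h
  have ht : (t : ℂ) • x = -((1 - (t : ℂ)) • y) := eq_neg_of_add_eq_zero_left h
  have ht0 : t = 0 := by
    simpa [inner_smul_left, inner_smul_right, hy0, hx] using congrArg (fun v => ⟪v, B v⟫_ℂ) ht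
  subst ht0
  simp [hy] at h

theorem ofReal_mem_numericalRange_of_im_eq_zero (B : H →L[ℂ] H) {x y : H} (hx : ‖x‖ = 1)
    (hy : y ≠ 0) (hBx : ⟪x, B x⟫_ℂ = 1) (hBy : ⟪y, B y⟫_ℂ = 0)
    (him : (⟪x, B y⟫_ℂ + ⟪y, B x⟫_ℂ).im = 0) {a : ℝ} (ha : a ∈ Set.Icc (0 : ℝ) 1) :
    (a : ℂ) ∈ numericalRange B := by
  set r := (⟪x, B y⟫_ℂ + ⟪y, B x⟫_ℂ).re
  set v : ℝ → H := fun t => (t : ℂ) • x + (1 - (t : ℂ)) • y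
  have hv0 : ∀ t, v t ≠ 0 :=
    smul_add_one_sub_smul_ne_zero B (by simp [hBx]) hy hBy
  have hBv : ∀ t, ⟪v t, B (v t)⟫_ℂ = ((t ^ 2 + t * (1 - t) * r : ℝ) : ℂ) := by
    intro t
    have hr : ⟪x, B y⟫_ℂ + ⟪y, B x⟫_ℂ = r := Complex.ext rfl (by simpa using him)
    simp only [v, map_add, map_smul, inner_add_left, inner_add_right, inner_smul_left,
      inner_smul_right, map_sub, map_one, Complex.conj_ofReal, hBx, hBy]
    push_cast
    linear_combination (t : ℂ) * (1 - t) * hr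
  set f : ℝ → ℝ := fun t => (t ^ 2 + t * (1 - t) * r) / ‖v t‖ ^ 2
  have hf : Continuous f := by
    refine Continuous.div (by fun_prop) (by fun_prop) fun t => ?_
    simpa using hv0 t
  obtain ⟨t, -, hft⟩ := intermediate_value_Icc zero_le_one hf.continuousOn
    (by simpa [f, v, hx] using ha)
  have := inner_map_self_div_norm_sq_mem_numericalRange B (hv0 t)
  rw [hBv, ← Complex.ofReal_pow, ← Complex.ofReal_div] at this
  exact hft ▸ this

theorem ofReal_mem_numericalRange (B : H →L[ℂ] H) {x y : H} (hx : ‖x‖ = 1) (hy : ‖y‖ = 1)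
    (hBx : ⟪x, B x⟫_ℂ = 1) (hBy : ⟪y, B y⟫_ℂ = 0) {a : ℝ} (ha : a ∈ Set.Icc (0 : ℝ) 1) :
    (a : ℂ) ∈ numericalRange B := by
  obtain ⟨μ, hμ, him⟩ := exists_norm_eq_one_im_inner_add_inner_eq_zero B x y
  refine ofReal_mem_numericalRange_of_im_eq_zero B hx ?_ hBx ?_ him ha
  · rw [← norm_ne_zero_iff, norm_smul, hμ, hy]
    norm_num
  · simp [hBy]

theorem convex_numericalRange (A : H →L[ℂ] H) : Convex ℝ (numericalRange A) := by
  rintro _ ⟨x, hx, rfl⟩ _ ⟨y, hy, rfl⟩ a b ha hb hab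
  set p := ⟪x, A x⟫_ℂ
  set q := ⟪y, A y⟫_ℂ
  rcases eq_or_ne p q with hpq | hpq
  · exact ⟨x, hx, by rw [← hpq, Convex.combo_self hab]⟩
  have hpq' : p - q ≠ 0 := sub_ne_zero.2 hpq
  set B : H →L[ℂ] H := (p - q)⁻¹ • (A - q • 1)
  have hB : ∀ u : H, ‖u‖ = 1 → ⟪u, B u⟫_ℂ = (p - q)⁻¹ * (⟪u, A u⟫_ℂ - q) := by
    intro u hu
    simp [B, inner_self_eq_norm_sq_to_K, hu]
  obtain ⟨u, hu, hBu⟩ := ofReal_mem_numericalRange B hx hy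
    (by rw [hB x hx, inv_mul_cancel₀ hpq']) (by rw [hB y hy, sub_self, mul_zero])
    (a := a) ⟨ha, by linarith⟩
  refine ⟨u, hu, ?_⟩
  rw [hB u hu, eq_inv_mul_iff_mul_eq₀ hpq'] at hBu
  rw [eq_sub_of_add_eq' hab, Complex.real_smul, Complex.real_smul]
  push_cast
  linear_combination hBu

theorem isOpen_halfPlane (θ ω : ℝ) : IsOpen (halfPlane θ ω) :=
  isOpen_lt continuous_const (by fun_prop)

theorem halfPlane_neg_arg {c : ℂ} (hc : c ≠ 0) (u : ℝ) :
    halfPlane (-c.arg) (u / ‖c‖) = {z | u < (c * z).re} := by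
  have hc' : 0 < ‖c‖ := norm_pos_iff.2 hc
  have hrot : Complex.exp (-((-c.arg : ℝ) : ℂ) * Complex.I) = c / ‖c‖ := by
    rw [eq_div_iff (by exact_mod_cast hc'.ne'), mul_comm]
    simp
  ext z
  simp only [halfPlane, Set.mem_ofPred_eq]
  rw [hrot, div_mul_eq_mul_div, Complex.div_ofReal_re, div_lt_div_iff_of_pos_right hc']

theorem exists_halfPlane_of_notMem_closure {s : Set ℂ} (hs : Convex ℝ s) {z : ℂ}
    (hz : z ∉ closure s) : ∃ θ ω : ℝ, z ∈ halfPlane θ ω ∧ Disjoint s (halfPlane θ ω) := by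
  rcases s.eq_empty_or_nonempty with rfl | ⟨w, hw⟩
  · exact ⟨0, z.re - 1, by simp [halfPlane], Set.empty_disjoint _⟩
  obtain ⟨f, u, hfs, hfz⟩ :=
    RCLike.geometric_hahn_banach_closed_point (𝕜 := ℂ) hs.closure isClosed_closure hz
  have hf : ∀ v, f v = f 1 * v := fun v => by simpa [mul_comm] using f.map_smul v 1
  have hc : f 1 ≠ 0 := by
    intro h0
    have hfw := hfs w (subset_closure hw)
    rw [hf, h0] at hfw hfz
    simp only [zero_mul, RCLike.zero_re] at hfw hfz
    linarith
  refine ⟨-(f 1).arg, u / ‖f 1‖, ?_, ?_⟩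
  · rw [halfPlane_neg_arg hc, Set.mem_ofPred, ← hf]
    exact hfz
  · rw [halfPlane_neg_arg hc, Set.disjoint_left]
    intro v hv
    simpa [← hf] using (hfs v (subset_closure hv)).le

theorem disjoint_numericalRange_halfPlane {A : H →L[ℂ] H} {θ ω : ℝ}
    (hsub : halfPlane θ ω ⊆ resolventSet ℂ A)
    (hbound : ∀ w ∈ halfPlane θ ω,
      ‖resolvent A w‖ ≤ 1 / ((Complex.exp (-(θ : ℂ) * Complex.I) * w).re - ω)) :
    Disjoint (numericalRange A) (halfPlane θ ω) := by
  rw [Set.disjoint_left]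
  rintro _ ⟨x, hx, rfl⟩ hw
  set ε := Complex.exp (-(θ : ℂ) * Complex.I)
  set w := ⟪x, A x⟫_ℂ
  set δ := (ε * w).re - ω
  have hδ : 0 < δ := sub_pos.2 hw
  set K := ‖w • x - A x‖ ^ 2
  -- `(δ + t) ^ 2 ≤ t ^ 2 + K` below fails as soon as `2 δ t ≥ K`
  set t := K / δ
  have ht : 0 ≤ t := by positivity
  set z := w + t * Complex.exp (θ * Complex.I)
  have hεz : (ε * z).re - ω = δ + t := by
    have : ε * Complex.exp (θ * Complex.I) = 1 := by simp [ε, ← Complex.exp_add]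
    simp only [z, mul_add, mul_left_comm ε, this, mul_one, Complex.add_re, Complex.ofReal_re, δ]
    ring
  have hz : z ∈ halfPlane θ ω := show ω < (ε * z).re by linarith
  have hlow : (δ + t) * ‖x‖ ≤ ‖(algebraMap ℂ (H →L[ℂ] H) z - A) x‖ := by
    have hR := hbound z hz
    rw [hεz, one_div] at hR
    exact (ContinuousLinearMap.norm_ringInverse_le_inv_iff (hsub hz) (by positivity)).1 hR x
  have hzw : ‖z - w‖ = t := by simp [z, Complex.norm_exp, abs_of_nonneg ht]
  have hpyth := norm_smul_sub_sq_of_norm_eq_one hx z (A x)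
  rw [Algebra.algebraMap_eq_smul_one, sub_apply, smul_apply, one_apply_eq_self, hx,
    mul_one] at hlow
  rw [hzw] at hpyth
  have hK : t * δ = K := div_mul_cancel₀ K hδ.ne'
  nlinarith

theorem mem_numResolventSet_of_disjoint [CompleteSpace H] {A : H →L[ℂ] H} {θ ω : ℝ}
    (h : Disjoint (numericalRange A) (halfPlane θ ω)) {z : ℂ} (hz : z ∈ halfPlane θ ω) :
    z ∈ numResolventSet A := by
  set ε := Complex.exp (-(θ : ℂ) * Complex.I)
  have hre : ∀ x : H, (ε * ⟪x, A x⟫_ℂ).re ≤ ω * ‖x‖ ^ 2 :=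
    re_mul_inner_map_self_le fun w hw => not_lt.1 (Set.disjoint_left.1 h hw)
  have hcoer : ∀ v ∈ halfPlane θ ω, ∀ x : H,
      ‖x‖ ^ 2 * ((ε * v).re - ω) ≤ ‖⟪(algebraMap ℂ (H →L[ℂ] H) v - A) x, x⟫_ℂ‖ := by
    intro v hv x
    have hinner : ⟪x, (algebraMap ℂ (H →L[ℂ] H) v - A) x⟫_ℂ = v * ‖x‖ ^ 2 - ⟪x, A x⟫_ℂ := by
      simp [Algebra.algebraMap_eq_smul_one, inner_self_eq_norm_sq_to_K]
    have hsplit : (ε * (v * ‖x‖ ^ 2 - ⟪x, A x⟫_ℂ)).re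
        = (ε * v).re * ‖x‖ ^ 2 - (ε * ⟪x, A x⟫_ℂ).re := by
      rw [mul_sub, Complex.sub_re, ← mul_assoc, ← Complex.ofReal_pow, Complex.re_mul_ofReal]
    calc ‖x‖ ^ 2 * ((ε * v).re - ω)
        ≤ (ε * (v * ‖x‖ ^ 2 - ⟪x, A x⟫_ℂ)).re := by linarith [hre x]
      _ ≤ ‖ε * (v * ‖x‖ ^ 2 - ⟪x, A x⟫_ℂ)‖ := Complex.re_le_norm _
      _ = ‖⟪(algebraMap ℂ (H →L[ℂ] H) v - A) x, x⟫_ℂ‖ := by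
          rw [norm_inner_symm, hinner, norm_mul]
          simp [ε, Complex.norm_exp]
  refine ⟨θ, ω, hz, fun v hv => ?_, fun v hv => ?_⟩
  · exact ContinuousLinearMap.isUnit_of_forall_le_norm_inner_map _ (c := ⟨_, (sub_pos.2 hv).le⟩)
      (NNReal.coe_pos.1 (sub_pos.2 hv)) (hcoer v hv)
  · rw [one_div]
    exact ContinuousLinearMap.norm_ringInverse_le_of_forall_le_norm_inner_map _ (sub_pos.2 hv)
      (hcoer v hv)

end NumericalRange

/-- For a bounded operator on a complex Hilbert space, the numerical spectrum is the
closure of the numerical range `W(A) = {⟨Ax, x⟩ : ‖x‖ = 1}` (inner product linear in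
the first entry, i.e. `⟪x, A x⟫` in Mathlib's convention). -/
theorem numSpectrum_eq_closure_numericalRange {H : Type*} [NormedAddCommGroup H]
    [InnerProductSpace ℂ H] [CompleteSpace H] (A : H →L[ℂ] H) :
    numSpectrum A = closure {z : ℂ | ∃ x : H, ‖x‖ = 1 ∧ z = (inner ℂ x (A x) : ℂ)} := by
  change (numResolventSet A)ᶜ = closure (numericalRange A)
  rw [compl_eq_comm]
  ext z
  constructor
  · intro hz
    obtain ⟨θ, ω, hzH, hdisj⟩ := exists_halfPlane_of_notMem_closure (convex_numericalRange A) hz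
    exact mem_numResolventSet_of_disjoint hdisj hzH
  · rintro ⟨θ, ω, hz, hsub, hbound⟩ hzW
    have hW : closure (numericalRange A) ⊆ (halfPlane θ ω)ᶜ :=
      closure_minimal (disjoint_numericalRange_halfPlane hsub hbound).subset_compl_right
        (isOpen_halfPlane θ ω).isClosed_compl
    exact hW hzW hz
end
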